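/- (Bäcklund transformation s₋ for Painlevé III′.) Let (q, p, H) solve the Painlevé III′ Hamiltonian system with parameters v1, v2 ∈ ℂ on an open set U ⊆ ℂ with 0 ∉ U, and assume p(s) ≠ 0 and p(s) ≠ 1 for all s ∈ U. Define q̃(s) := q(s) − (v1·p(s) − (v1+v2)/2) / (p(s)·(p(s) − 1)) and p̃(s) := p(s). Then (q̃, p̃) solves the Painlevé III′ Hamiltonian system with parameters (−v1, −v2) on U, and its Hamiltonian H̃ satisfies s·H̃(s) = s·H(s) for all s ∈ U. -/

import Mathlib

open Complex

/-- `(q, p, H)` solves the Painlevé III′ Hamiltonian system with parameters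
`v1, v2` on an open set `U ⊆ ℂ` with `0 ∉ U`. -/
def SolvesPIII' (v1 v2 : ℂ) (U : Set ℂ) (q p H : ℂ → ℂ) : Prop :=
  IsOpen U ∧ (0 : ℂ) ∉ U ∧
    DifferentiableOn ℂ q U ∧ DifferentiableOn ℂ p U ∧
    (∀ s ∈ U, s * H s =
      q s ^ 2 * p s ^ 2 - (q s ^ 2 + v1 * q s - s) * p s
        + (1 / 2) * (v1 + v2) * q s) ∧
    (∀ s ∈ U, s * deriv q s = 2 * q s ^ 2 * p s - q s ^ 2 - v1 * q s + s) ∧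
    (∀ s ∈ U, s * deriv p s =
      -2 * q s * p s ^ 2 + 2 * q s * p s + v1 * p s - (1 / 2) * (v1 + v2))

/-! The transformation `s₋` keeps `p` and shifts `q` by a rational function of `p`; the new
Hamiltonian is the old one. Each of the three defining identities of the transformed system is the
corresponding old identity plus a rational identity in `q, p, s, v1, v2` that holds away from the
poles `p = 0, 1` of the shift. -/

noncomputable def sminusShift (v1 v2 x : ℂ) : ℂ :=
  (v1 * x - (v1 + v2) / 2) / (x * (x - 1))

section Algebra

variable {v1 v2 x : ℂ}

theorem sminusShift_mul_self_mul_sub_one (hx0 : x ≠ 0) (hx1 : x ≠ 1) :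
    sminusShift v1 v2 x * (x * (x - 1)) = v1 * x - (v1 + v2) / 2 :=
  div_mul_cancel₀ _ (mul_ne_zero hx0 (sub_ne_zero.mpr hx1))

theorem hasDerivAt_sminusShift (hx0 : x ≠ 0) (hx1 : x ≠ 1) :
    HasDerivAt (sminusShift v1 v2)
      (-(v1 * x ^ 2 - (v1 + v2) * x + (v1 + v2) / 2) / (x * (x - 1)) ^ 2) x := by
  have hden : x * (x - 1) ≠ 0 := mul_ne_zero hx0 (sub_ne_zero.mpr hx1)
  refine ((((hasDerivAt_id' x).const_mul v1).sub_const ((v1 + v2) / 2)).div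
    ((hasDerivAt_id' x).mul ((hasDerivAt_id' x).sub_const 1)) hden).congr_deriv ?_
  simp only [Pi.mul_apply]
  ring

theorem sminus_hamiltonian_eq (hx0 : x ≠ 0) (hx1 : x ≠ 1) (q s : ℂ) :
    (q - sminusShift v1 v2 x) ^ 2 * x ^ 2
        - ((q - sminusShift v1 v2 x) ^ 2 + -v1 * (q - sminusShift v1 v2 x) - s) * x
        + (1 / 2) * (-v1 + -v2) * (q - sminusShift v1 v2 x) =
      q ^ 2 * x ^ 2 - (q ^ 2 + v1 * q - s) * x + (1 / 2) * (v1 + v2) * q := by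
  linear_combination (sminusShift v1 v2 x - 2 * q) *
    sminusShift_mul_self_mul_sub_one (v1 := v1) (v2 := v2) hx0 hx1

theorem sminus_p_rhs_eq (hx0 : x ≠ 0) (hx1 : x ≠ 1) (q : ℂ) :
    -2 * (q - sminusShift v1 v2 x) * x ^ 2 + 2 * (q - sminusShift v1 v2 x) * x + -v1 * x
        - (1 / 2) * (-v1 + -v2) =
      -2 * q * x ^ 2 + 2 * q * x + v1 * x - (1 / 2) * (v1 + v2) := by
  linear_combination 2 * sminusShift_mul_self_mul_sub_one (v1 := v1) (v2 := v2) hx0 hx1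

theorem sminus_q_rhs_eq (hx0 : x ≠ 0) (hx1 : x ≠ 1) (q s : ℂ) :
    2 * q ^ 2 * x - q ^ 2 - v1 * q + s
        - -(v1 * x ^ 2 - (v1 + v2) * x + (v1 + v2) / 2) / (x * (x - 1)) ^ 2
          * (-2 * q * x ^ 2 + 2 * q * x + v1 * x - (1 / 2) * (v1 + v2)) =
      2 * (q - sminusShift v1 v2 x) ^ 2 * x - (q - sminusShift v1 v2 x) ^ 2
        - -v1 * (q - sminusShift v1 v2 x) + s := by
  have hx1' : x - 1 ≠ 0 := sub_ne_zero.mpr hx1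
  unfold sminusShift
  field_simp
  ring

end Algebra

namespace SolvesPIII'

variable {v1 v2 : ℂ} {U : Set ℂ} {q p H : ℂ → ℂ}

theorem congr (h : SolvesPIII' v1 v2 U q p H) {q' p' : ℂ → ℂ}
    (hq : Set.EqOn q q' U) (hp : Set.EqOn p p' U) : SolvesPIII' v1 v2 U q' p' H := by
  obtain ⟨hU, h0, hqd, hpd, hH, hq', hp'⟩ := h
  have hderiv {f g : ℂ → ℂ} (hfg : Set.EqOn f g U) {s : ℂ} (hs : s ∈ U) :
      deriv g s = deriv f s :=
    (Filter.eventuallyEq_of_mem (hU.mem_nhds hs) hfg).symm.deriv_eq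
  refine ⟨hU, h0, hqd.congr hq.symm, hpd.congr hp.symm, fun s hs => ?_, fun s hs => ?_,
    fun s hs => ?_⟩
  · rw [← hq hs, ← hp hs]; exact hH s hs
  · rw [hderiv hq hs, ← hq hs, ← hp hs]; exact hq' s hs
  · rw [hderiv hp hs, ← hq hs, ← hp hs]; exact hp' s hs

theorem sminus (h : SolvesPIII' v1 v2 U q p H) (hp0 : ∀ s ∈ U, p s ≠ 0)
    (hp1 : ∀ s ∈ U, p s ≠ 1) :
    SolvesPIII' (-v1) (-v2) U (fun s => q s - sminusShift v1 v2 (p s)) p H := by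
  obtain ⟨hU, h0, hqd, hpd, hH, hq', hp'⟩ := h
  have hpDeriv {s : ℂ} (hs : s ∈ U) : HasDerivAt p (deriv p s) s :=
    (hpd.differentiableAt (hU.mem_nhds hs)).hasDerivAt
  have hqtDeriv {s : ℂ} (hs : s ∈ U) : HasDerivAt (fun s => q s - sminusShift v1 v2 (p s))
      (deriv q s - -(v1 * p s ^ 2 - (v1 + v2) * p s + (v1 + v2) / 2) / (p s * (p s - 1)) ^ 2
        * deriv p s) s :=
    (hqd.differentiableAt (hU.mem_nhds hs)).hasDerivAt.sub
      ((hasDerivAt_sminusShift (v1 := v1) (v2 := v2) (hp0 s hs) (hp1 s hs)).comp s (hpDeriv hs))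
  refine ⟨hU, h0, fun s hs => (hqtDeriv hs).differentiableAt.differentiableWithinAt, hpd,
    fun s hs => ?_, fun s hs => ?_, fun s hs => ?_⟩
  · rw [hH s hs, sminus_hamiltonian_eq (hp0 s hs) (hp1 s hs)]
  · rw [(hqtDeriv hs).deriv, ← sminus_q_rhs_eq (hp0 s hs) (hp1 s hs), ← hq' s hs, ← hp' s hs]
    ring
  · rw [hp' s hs, sminus_p_rhs_eq (hp0 s hs) (hp1 s hs)]

end SolvesPIII'

/-- Bäcklund transformation `s₋` for Painlevé III′:
`q̃ = q − (v1·p − (v1+v2)/2)/(p(p−1))`, `p̃ = p` solves the system with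
parameters `(−v1, −v2)`, and the Hamiltonian is unchanged. -/
theorem painleveIIIprime_backlund_sminus (v1 v2 : ℂ) (U : Set ℂ)
    (q p H : ℂ → ℂ)
    (hsol : SolvesPIII' v1 v2 U q p H)
    (hp0 : ∀ s ∈ U, p s ≠ 0)
    (hp1 : ∀ s ∈ U, p s ≠ 1)
    (qt pt : ℂ → ℂ)
    (hqt : ∀ s ∈ U, qt s =
      q s - (v1 * p s - (v1 + v2) / 2) / (p s * (p s - 1)))
    (hpt : ∀ s ∈ U, pt s = p s) :
    ∃ Ht : ℂ → ℂ,
      SolvesPIII' (-v1) (-v2) U qt pt Ht ∧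
      ∀ s ∈ U, s * Ht s = s * H s :=
  ⟨H, (hsol.sminus hp0 hp1).congr (fun s hs => (hqt s hs).symm) (fun s hs => (hpt s hs).symm),
    fun _ _ => rfl⟩
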